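/- Let n, m, p be natural numbers, let f : ℝⁿ × ℝᵐ × ℝᵖ → ℝ and G : ℝⁿ × ℝᵐ × ℝᵖ → ℝᵐ be differentiable at (x₀, y₀, z₀), and let y : ℝⁿ → ℝᵐ be differentiable at x₀ with y(x₀) = y₀. Suppose G(x, y(x), z₀) = 0 for all x in a neighborhood of x₀, the m×m Jacobian block ∂G/∂y at (x₀, y₀, z₀) is invertible, and x₀ is a local minimum of the map x ↦ f(x, y(x), z₀). Then, with all partial derivatives evaluated at (x₀, y₀, z₀), the stationarity equations F(x₀, y₀, z₀) = ∂f/∂x − (∂f/∂y) · (∂G/∂y)⁻¹ · (∂G/∂x) = 0 and G(x₀, y₀, z₀) = 0 both hold. -/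

import Mathlib

/-- The Jacobian matrix of a map `f : ℝᵖ → ℝⁿ` at a point `z`. -/
noncomputable def jacobianMatrix {p n : ℕ} (f : (Fin p → ℝ) → (Fin n → ℝ)) (z : Fin p → ℝ) :
    Matrix (Fin n) (Fin p) ℝ :=
  Matrix.of fun i j => fderiv ℝ f z (Pi.single j 1) i

/-- The gradient (as a vector) of a scalar map `f : ℝᵖ → ℝ` at a point `z`. -/
noncomputable def gradVec {p : ℕ} (f : (Fin p → ℝ) → ℝ) (z : Fin p → ℝ) : Fin p → ℝ :=
  fun j => fderiv ℝ f z (Pi.single j 1)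

lemma clm_pi_apply {m : ℕ} {E : Type*} [AddCommGroup E] [Module ℝ E]
    (T : (Fin m → ℝ) →ₗ[ℝ] E) (w : Fin m → ℝ) :
    T w = ∑ k, w k • T (Pi.single k 1) := by
  conv_lhs => rw [← Finset.univ_sum_single w]
  rw [map_sum]
  refine Finset.sum_congr rfl fun k _ => ?_
  rw [← map_smul]
  congr 1
  ext j
  simp [Pi.single_apply]

lemma mid_apply_sum {n m p : ℕ} {E : Type*} [NormedAddCommGroup E] [NormedSpace ℝ E]
    (T : ((Fin n → ℝ) × (Fin m → ℝ) × (Fin p → ℝ)) →L[ℝ] E) (w : Fin m → ℝ) :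
    T (0, w, 0) = ∑ k, w k • T (0, Pi.single k 1, 0) := by
  let S : (Fin m → ℝ) →ₗ[ℝ] E :=
    { toFun := fun w => T (0, w, 0)
      map_add' := fun a b => by
        show T (0, a + b, 0) = T (0, a, 0) + T (0, b, 0)
        rw [← map_add]
        congr 1
        simp [Prod.ext_iff]
      map_smul' := fun c a => by
        show T (0, c • a, 0) = c • T (0, a, 0)
        rw [← map_smul]
        congr 1
        simp [Prod.ext_iff] }
  exact clm_pi_apply S w


/-- **Theorem 1 of the paper.** A local solution `(x₀, y₀)` of the continuous bilevel problem
(with differentiable best-response `y(x)` satisfying the inner stationarity condition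
`G(x, y(x), z₀) = 0` and invertible `∂G/∂y`) satisfies the implicit equations
`F = ∂f/∂x − (∂f/∂y)(∂G/∂y)⁻¹(∂G/∂x) = 0` and `G = 0`. -/
theorem bilevel_stationarity_equations
    (n m p : ℕ)
    (f : (Fin n → ℝ) × (Fin m → ℝ) × (Fin p → ℝ) → ℝ)
    (G : (Fin n → ℝ) × (Fin m → ℝ) × (Fin p → ℝ) → (Fin m → ℝ))
    (x₀ : Fin n → ℝ) (y₀ : Fin m → ℝ) (z₀ : Fin p → ℝ)
    (hf : DifferentiableAt ℝ f (x₀, y₀, z₀))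
    (hG : DifferentiableAt ℝ G (x₀, y₀, z₀))
    (y : (Fin n → ℝ) → (Fin m → ℝ))
    (hy : DifferentiableAt ℝ y x₀) (hy₀ : y x₀ = y₀)
    (hsol : ∀ᶠ x in nhds x₀, G (x, y x, z₀) = 0)
    (hGy : IsUnit (jacobianMatrix (fun y' => G (x₀, y', z₀)) y₀).det)
    (hmin : IsLocalMin (fun x => f (x, y x, z₀)) x₀) :
    gradVec (fun x' => f (x', y₀, z₀)) x₀ -
        Matrix.vecMul (gradVec (fun y' => f (x₀, y', z₀)) y₀)
          ((jacobianMatrix (fun y' => G (x₀, y', z₀)) y₀)⁻¹ *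
            jacobianMatrix (fun x' => G (x', y₀, z₀)) x₀) = 0 ∧
      G (x₀, y₀, z₀) = 0 := by
  set L := fderiv ℝ f (x₀, y₀, z₀) with hL
  set M := fderiv ℝ G (x₀, y₀, z₀) with hMdef
  set D := fderiv ℝ y x₀ with hD
  -- the full derivatives along x ↦ (x, y x, z₀)
  have hφ : HasFDerivAt (fun x : Fin n → ℝ => (x, y x, z₀))
      ((ContinuousLinearMap.id ℝ (Fin n → ℝ)).prod (D.prod 0)) x₀ :=
    HasFDerivAt.prodMk (hasFDerivAt_id x₀) (HasFDerivAt.prodMk (hy.hasFDerivAt) (hasFDerivAt_const z₀ x₀))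
  have hf' : HasFDerivAt f L (x₀, y x₀, z₀) := by rw [hy₀]; exact hf.hasFDerivAt
  have hG' : HasFDerivAt G M (x₀, y x₀, z₀) := by rw [hy₀]; exact hG.hasFDerivAt
  have hFc : HasFDerivAt (fun x => f (x, y x, z₀))
      (L.comp ((ContinuousLinearMap.id ℝ (Fin n → ℝ)).prod (D.prod 0))) x₀ :=
    hf'.comp x₀ hφ
  have hmin0 : fderiv ℝ (fun x => f (x, y x, z₀)) x₀ = 0 := hmin.fderiv_eq_zero
  have hLeq : ∀ v, L (v, D v, 0) = 0 := by
    intro v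
    have h := hFc.fderiv
    rw [hmin0] at h
    have h2 := congrArg (fun T => T v) h.symm
    simpa using h2
  have hGc : HasFDerivAt (fun x => G (x, y x, z₀))
      (M.comp ((ContinuousLinearMap.id ℝ (Fin n → ℝ)).prod (D.prod 0))) x₀ :=
    hG'.comp x₀ hφ
  have hGzero : fderiv ℝ (fun x => G (x, y x, z₀)) x₀ = 0 := by
    have h0 : (fun x => G (x, y x, z₀)) =ᶠ[nhds x₀] (fun _ => (0 : Fin m → ℝ)) := hsol
    rw [h0.fderiv_eq]
    exact fderiv_const_apply 0
  have hMeq : ∀ v, M (v, D v, 0) = 0 := by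
    intro v
    have h := hGc.fderiv
    rw [hGzero] at h
    have h2 := congrArg (fun T => T v) h.symm
    simpa using h2
  -- partial derivatives in terms of the full derivatives
  have hGx : ∀ v, fderiv ℝ (fun x' => G (x', y₀, z₀)) x₀ v = M (v, 0, 0) := by
    intro v
    have hc : HasFDerivAt (fun x' => G (x', y₀, z₀))
        (M.comp ((ContinuousLinearMap.id ℝ (Fin n → ℝ)).prod 0)) x₀ :=
      hG.hasFDerivAt.comp x₀ (HasFDerivAt.prodMk (hasFDerivAt_id x₀) (hasFDerivAt_const (y₀, z₀) x₀))
    rw [hc.fderiv]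
    rfl
  have hGyp : ∀ w, fderiv ℝ (fun y' => G (x₀, y', z₀)) y₀ w = M (0, w, 0) := by
    intro w
    have hc : HasFDerivAt (fun y' => G (x₀, y', z₀))
        (M.comp ((0 : (Fin m → ℝ) →L[ℝ] (Fin n → ℝ)).prod
          ((ContinuousLinearMap.id ℝ (Fin m → ℝ)).prod 0))) y₀ :=
      hG.hasFDerivAt.comp y₀ (HasFDerivAt.prodMk (hasFDerivAt_const x₀ y₀)
        (HasFDerivAt.prodMk (hasFDerivAt_id y₀) (hasFDerivAt_const z₀ y₀)))
    rw [hc.fderiv]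
    rfl
  have hfx : ∀ v, fderiv ℝ (fun x' => f (x', y₀, z₀)) x₀ v = L (v, 0, 0) := by
    intro v
    have hc : HasFDerivAt (fun x' => f (x', y₀, z₀))
        (L.comp ((ContinuousLinearMap.id ℝ (Fin n → ℝ)).prod 0)) x₀ :=
      hf.hasFDerivAt.comp x₀ (HasFDerivAt.prodMk (hasFDerivAt_id x₀) (hasFDerivAt_const (y₀, z₀) x₀))
    rw [hc.fderiv]
    rfl
  have hfy : ∀ w, fderiv ℝ (fun y' => f (x₀, y', z₀)) y₀ w = L (0, w, 0) := by
    intro w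
    have hc : HasFDerivAt (fun y' => f (x₀, y', z₀))
        (L.comp ((0 : (Fin m → ℝ) →L[ℝ] (Fin n → ℝ)).prod
          ((ContinuousLinearMap.id ℝ (Fin m → ℝ)).prod 0))) y₀ :=
      hf.hasFDerivAt.comp y₀ (HasFDerivAt.prodMk (hasFDerivAt_const x₀ y₀)
        (HasFDerivAt.prodMk (hasFDerivAt_id y₀) (hasFDerivAt_const z₀ y₀)))
    rw [hc.fderiv]
    rfl
  -- matrices
  set B := jacobianMatrix (fun y' => G (x₀, y', z₀)) y₀ with hB
  set C := jacobianMatrix (fun x' => G (x', y₀, z₀)) x₀ with hC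
  set Dm : Matrix (Fin m) (Fin n) ℝ := Matrix.of fun k j => D (Pi.single j 1) k with hDm
  have hsplitM : ∀ v w, M (v, w, 0) = M (v, 0, 0) + M (0, w, 0) := by
    intro v w
    rw [← map_add]
    congr 1
    simp [Prod.ext_iff]
  have hsplitL : ∀ v w, L (v, w, 0) = L (v, 0, 0) + L (0, w, 0) := by
    intro v w
    rw [← map_add]
    congr 1
    simp [Prod.ext_iff]
  have hCD : C = -(B * Dm) := by
    ext i j
    have h1 : M (Pi.single j 1, 0, 0) i + M (0, D (Pi.single j 1), 0) i = 0 := by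
      have h := hMeq (Pi.single j 1)
      rw [hsplitM] at h
      simpa using congrFun h i
    have hsum : M (0, D (Pi.single j 1), 0) i
        = ∑ k, D (Pi.single j 1) k * M (0, Pi.single k 1, 0) i := by
      have := congrFun (mid_apply_sum M (D (Pi.single j 1))) i
      simpa [smul_eq_mul] using this
    have hCij : C i j = M (Pi.single j 1, 0, 0) i := by
      show fderiv ℝ (fun x' => G (x', y₀, z₀)) x₀ (Pi.single j 1) i = _
      rw [hGx]
    have hBik : ∀ k, B i k = M (0, Pi.single k 1, 0) i := by
      intro k
      show fderiv ℝ (fun y' => G (x₀, y', z₀)) y₀ (Pi.single k 1) i = _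
      rw [hGyp]
    rw [Matrix.neg_apply, Matrix.mul_apply, hCij]
    have hBD : ∑ k, B i k * Dm k j = ∑ k, D (Pi.single j 1) k * M (0, Pi.single k 1, 0) i := by
      refine Finset.sum_congr rfl fun k _ => ?_
      rw [hBik k]
      show M (0, Pi.single k 1, 0) i * D (Pi.single j 1) k = _
      ring
    rw [hBD, ← hsum]
    linarith
  have hBinvC : B⁻¹ * C = -Dm := by
    rw [hCD, Matrix.mul_neg, ← Matrix.mul_assoc, Matrix.nonsing_inv_mul B hGy, Matrix.one_mul]
  constructor
  · funext j
    rw [Pi.sub_apply, Pi.zero_apply, hBinvC]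
    have h1 : L (Pi.single j 1, 0, 0) + L (0, D (Pi.single j 1), 0) = 0 := by
      have h := hLeq (Pi.single j 1)
      rwa [hsplitL] at h
    have hsum : L (0, D (Pi.single j 1), 0)
        = ∑ k, L (0, Pi.single k 1, 0) * D (Pi.single j 1) k := by
      rw [mid_apply_sum L (D (Pi.single j 1))]
      exact Finset.sum_congr rfl fun k _ => by rw [smul_eq_mul, mul_comm]
    have hgx : gradVec (fun x' => f (x', y₀, z₀)) x₀ j = L (Pi.single j 1, 0, 0) := hfx _
    have hvm : Matrix.vecMul (gradVec (fun y' => f (x₀, y', z₀)) y₀) (-Dm) j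
        = -∑ k, L (0, Pi.single k 1, 0) * D (Pi.single j 1) k := by
      rw [Matrix.vecMul, dotProduct]
      rw [← Finset.sum_neg_distrib]
      refine Finset.sum_congr rfl fun k _ => ?_
      have : gradVec (fun y' => f (x₀, y', z₀)) y₀ k = L (0, Pi.single k 1, 0) := hfy _
      rw [this]
      show L (0, Pi.single k 1, 0) * (-(Dm k j)) = _
      show L (0, Pi.single k 1, 0) * (-(D (Pi.single j 1) k)) = _
      ring
    rw [hgx, hvm, ← hsum]
    linarith
  · have h := hsol.self_of_nhds
    rwa [hy₀] at h
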